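/- Let F = (1/n)∑ᵢ fᵢ with each fᵢ convex differentiable with Lᵢ-Lipschitz gradient (Lᵢ > 0), L̄ = (1/n)∑ᵢ Lᵢ, qᵢ = Lᵢ/(n L̄). Let R : ℝ^d → ℝ be μ-strongly convex (μ ≥ 0) and let x* be a minimizer of P = F + R, at which the first-order optimality condition ∇F(x*) + ξ* = 0 holds for some subgradient ξ* ∈ ∂R(x*). Then for all x ∈ ℝ^d, (1/n)∑ᵢ (1/(n qᵢ))‖∇fᵢ(x) − ∇fᵢ(x*)‖² ≤ 2L̄ (P(x) − P(x*) − (μ/2)‖x − x*‖²). -/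

import Mathlib

open RealInnerProductSpace

/-- `ξ` is a subgradient of the convex function `R` at `x`. -/
def HasSubgradientAt {d : ℕ} (R : EuclideanSpace ℝ (Fin d) → ℝ)
    (ξ x : EuclideanSpace ℝ (Fin d)) : Prop :=
  ∀ y, R x + ⟪ξ, y - x⟫ ≤ R y

/-! Co-coercivity: for convex `fᵢ` with `Lᵢ`-Lipschitz gradient,
`‖∇fᵢ x - ∇fᵢ x*‖² ≤ 2 Lᵢ (fᵢ x - fᵢ x* - ⟪∇fᵢ x*, x - x*⟫)`. This follows from the descent lemma
applied to the convex function `fᵢ - ⟪∇fᵢ x*, ·⟫`, which is minimized at `x*`, at its gradient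
step from `x`. Since `1 / (n qᵢ) = L̄ / Lᵢ`, averaging over `i` bounds the left-hand side by `2 L̄`
times the Bregman divergence of `F`, and the optimality condition `ξ* = -∇F x*` turns the
`μ`-strong convexity inequality of `R` at `x*` into a bound of that divergence by
`P x - P x* - μ/2 ‖x - x*‖²`. -/

open Set

section

variable {E : Type*} [NormedAddCommGroup E] [InnerProductSpace ℝ E] [CompleteSpace E]
  {f : E → ℝ} {g : E → E} {L : ℝ}

theorem HasGradientAt.hasDerivAt_comp_lineMap {x y : E} {t : ℝ} {g' : E}
    (hf : HasGradientAt f g' (AffineMap.lineMap x y t)) :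
    HasDerivAt (fun s : ℝ => f (AffineMap.lineMap x y s)) ⟪g', y - x⟫ t :=
  (hasGradientAt_iff_hasFDerivAt.mp hf).comp_hasDerivAt t AffineMap.hasDerivAt_lineMap

theorem ConvexOn.add_inner_sub_le (hf : ConvexOn ℝ univ f) {x g' : E}
    (hx : HasGradientAt f g' x) (y : E) : f x + ⟪g', y - x⟫ ≤ f y := by
  have hline := (hf.comp_affineMap (AffineMap.lineMap x y)).le_slope_of_hasDerivAt
    (mem_univ 0) (mem_univ 1) zero_lt_one
    (HasGradientAt.hasDerivAt_comp_lineMap (by simpa using hx))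
  simp only [slope_def_field, Function.comp_apply, AffineMap.lineMap_apply_zero,
    AffineMap.lineMap_apply_one, sub_zero, div_one] at hline
  linarith

theorem le_add_inner_add_sq_of_lipschitz_gradient (hg : ∀ z, HasGradientAt f (g z) z)
    (hlip : ∀ u v, ‖g u - g v‖ ≤ L * ‖u - v‖) (x y : E) :
    f y ≤ f x + ⟪g x, y - x⟫ + L / 2 * ‖y - x‖ ^ 2 := by
  -- `φ` is `f` minus its quadratic upper model along the segment; it is antitone on `[0, 1]`.
  set φ : ℝ → ℝ := fun t =>
    f (AffineMap.lineMap x y t) - t * ⟪g x, y - x⟫ - L / 2 * t ^ 2 * ‖y - x‖ ^ 2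
  set φ' : ℝ → ℝ := fun t =>
    ⟪g (AffineMap.lineMap x y t), y - x⟫ - ⟪g x, y - x⟫ - L * t * ‖y - x‖ ^ 2
  have hφ : ∀ t, HasDerivAt φ (φ' t) t := by
    intro t
    refine ((((hg (AffineMap.lineMap x y t)).hasDerivAt_comp_lineMap).sub
      ((hasDerivAt_id t).mul_const ⟪g x, y - x⟫)).sub
      (((hasDerivAt_pow 2 t).const_mul (L / 2)).mul_const (‖y - x‖ ^ 2))).congr_deriv ?_
    simp only [φ']
    ring
  have hφ'_nonpos : ∀ t, 0 ≤ t → φ' t ≤ 0 := by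
    intro t ht
    have hdist : AffineMap.lineMap x y t - x = t • (y - x) := by
      rw [AffineMap.lineMap_apply_module']; abel
    have hgrad : ‖g (AffineMap.lineMap x y t) - g x‖ ≤ L * (t * ‖y - x‖) := by
      simpa [hdist, norm_smul, abs_of_nonneg ht] using hlip (AffineMap.lineMap x y t) x
    have hcs := real_inner_le_norm (g (AffineMap.lineMap x y t) - g x) (y - x)
    have := mul_le_mul_of_nonneg_right hgrad (norm_nonneg (y - x))
    simp only [φ', ← inner_sub_left]
    nlinarith
  have hanti : AntitoneOn φ (Icc 0 1) :=
    antitoneOn_of_hasDerivWithinAt_nonpos (convex_Icc 0 1)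
      (fun t _ => (hφ t).continuousAt.continuousWithinAt)
      (fun t _ => (hφ t).hasDerivWithinAt)
      (fun t ht => hφ'_nonpos t (interior_subset ht).1)
  have := hanti (left_mem_Icc.mpr zero_le_one) (right_mem_Icc.mpr zero_le_one) zero_le_one
  simp only [φ, AffineMap.lineMap_apply_zero, AffineMap.lineMap_apply_one] at this
  linarith

theorem le_sub_sq_norm_div_of_lipschitz_gradient (hg : ∀ z, HasGradientAt f (g z) z)
    (hL : 0 < L) (hlip : ∀ u v, ‖g u - g v‖ ≤ L * ‖u - v‖) (x : E) :
    f (x - L⁻¹ • g x) ≤ f x - ‖g x‖ ^ 2 / (2 * L) := by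
  have hstep := le_add_inner_add_sq_of_lipschitz_gradient hg hlip x (x - L⁻¹ • g x)
  rw [sub_sub_cancel_left, inner_neg_right, real_inner_smul_right, real_inner_self_eq_norm_sq,
    norm_neg, norm_smul, Real.norm_of_nonneg (inv_nonneg.mpr hL.le)] at hstep
  convert hstep using 1
  field_simp
  ring

theorem sq_norm_le_of_lipschitz_gradient_of_forall_le (hg : ∀ z, HasGradientAt f (g z) z)
    (hL : 0 < L) (hlip : ∀ u v, ‖g u - g v‖ ≤ L * ‖u - v‖) {y : E} (hmin : ∀ z, f y ≤ f z)
    (x : E) : ‖g x‖ ^ 2 ≤ 2 * L * (f x - f y) := by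
  have hstep := (hmin _).trans (le_sub_sq_norm_div_of_lipschitz_gradient hg hL hlip x)
  rw [le_sub_iff_add_le, ← le_sub_iff_add_le', div_le_iff₀ (by positivity)] at hstep
  linarith

theorem ConvexOn.sq_norm_sub_le_of_lipschitz_gradient (hf : ConvexOn ℝ univ f)
    (hg : ∀ z, HasGradientAt f (g z) z) (hL : 0 < L)
    (hlip : ∀ u v, ‖g u - g v‖ ≤ L * ‖u - v‖) (x y : E) :
    ‖g x - g y‖ ^ 2 ≤ 2 * L * (f x - f y - ⟪g y, x - y⟫) := by
  set ψ : E → ℝ := fun w => f w - ⟪g y, w⟫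
  have hψ : ∀ z, HasGradientAt ψ (g z - g y) z := fun z => by
    rw [hasGradientAt_iff_hasFDerivAt, map_sub]
    exact (hg z).hasFDerivAt.sub (InnerProductSpace.toDual ℝ E (g y)).hasFDerivAt
  have hconv : ConvexOn ℝ univ ψ := hf.sub ((innerₛₗ ℝ (g y)).concaveOn convex_univ)
  have hmin : ∀ z, ψ y ≤ ψ z := fun z => by
    simpa using hconv.add_inner_sub_le (hψ y) z
  have hlip' : ∀ u v, ‖(g u - g y) - (g v - g y)‖ ≤ L * ‖u - v‖ := fun u v => by
    simpa using hlip u v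
  have := sq_norm_le_of_lipschitz_gradient_of_forall_le hψ hL hlip' hmin x
  rw [inner_sub_right]
  linarith

theorem ConvexOn.sum_div_mul_sq_norm_sub_le_of_lipschitz_gradient {ι : Type*} [Fintype ι]
    {φ : ι → E → ℝ} {φ' : ι → E → E} {K : ι → ℝ} (hφ : ∀ i, ConvexOn ℝ univ (φ i))
    (hφ' : ∀ i z, HasGradientAt (φ i) (φ' i z) z) (hK : ∀ i, 0 < K i)
    (hlip : ∀ i u v, ‖φ' i u - φ' i v‖ ≤ K i * ‖u - v‖) {M : ℝ} (hM : 0 ≤ M) (x y : E) :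
    ∑ i, M / K i * ‖φ' i x - φ' i y‖ ^ 2 ≤
      2 * M * ∑ i, (φ i x - φ i y - ⟪φ' i y, x - y⟫) := by
  rw [Finset.mul_sum]
  refine Finset.sum_le_sum fun i _ => ?_
  calc M / K i * ‖φ' i x - φ' i y‖ ^ 2
      ≤ M / K i * (2 * K i * (φ i x - φ i y - ⟪φ' i y, x - y⟫)) :=
        mul_le_mul_of_nonneg_left
          ((hφ i).sq_norm_sub_le_of_lipschitz_gradient (hφ' i) (hK i) (hlip i) x y)
          (div_nonneg hM (hK i).le)
    _ = 2 * M * (φ i x - φ i y - ⟪φ' i y, x - y⟫) := by field_simp [(hK i).ne']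

theorem HasGradientAt.const_mul_sum {ι : Type*} (s : Finset ι) (c : ℝ) {φ : ι → E → ℝ}
    {φ' : ι → E} {x : E} (hφ : ∀ i ∈ s, HasGradientAt (φ i) (φ' i) x) :
    HasGradientAt (fun z => c * ∑ i ∈ s, φ i z) (c • ∑ i ∈ s, φ' i) x := by
  rw [hasGradientAt_iff_hasFDerivAt, map_smul, map_sum]
  exact (HasFDerivAt.fun_sum fun i hi => (hφ i hi).hasFDerivAt).const_mul c

end

theorem gradient_norm_bound_by_objective_gap_general (d n : ℕ)
    (f : Fin n → EuclideanSpace ℝ (Fin d) → ℝ) (L : Fin n → ℝ)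
    (hL : ∀ i, 0 < L i)
    (hconv : ∀ i, ConvexOn ℝ Set.univ (f i))
    (hdiff : ∀ i, Differentiable ℝ (f i))
    (hlip : ∀ i x y, ‖gradient (f i) x - gradient (f i) y‖ ≤ L i * ‖x - y‖)
    (Lbar : ℝ) (hLbar : Lbar = (1 / (n : ℝ)) * ∑ i, L i)
    (q : Fin n → ℝ) (hq : ∀ i, q i = L i / ((n : ℝ) * Lbar))
    (F : EuclideanSpace ℝ (Fin d) → ℝ)
    (hF : ∀ x, F x = (1 / (n : ℝ)) * ∑ i, f i x)
    (R : EuclideanSpace ℝ (Fin d) → ℝ) (μ : ℝ)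
    (hRsc : ∀ x ξ, HasSubgradientAt R ξ x →
      ∀ y, R x + ⟪ξ, y - x⟫ + (μ / 2) * ‖y - x‖ ^ 2 ≤ R y)
    (P : EuclideanSpace ℝ (Fin d) → ℝ) (hP : ∀ x, P x = F x + R x)
    (xstar ξstar : EuclideanSpace ℝ (Fin d))
    (hξ : HasSubgradientAt R ξstar xstar)
    (hopt : gradient F xstar + ξstar = 0) :
    ∀ x : EuclideanSpace ℝ (Fin d),
      (1 / (n : ℝ)) * ∑ i, (1 / ((n : ℝ) * q i)) *
          ‖gradient (f i) x - gradient (f i) xstar‖ ^ 2 ≤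
        2 * Lbar * (P x - P xstar - (μ / 2) * ‖x - xstar‖ ^ 2) := by
  intro x
  have hLbar_nonneg : 0 ≤ Lbar :=
    hLbar ▸ mul_nonneg (by positivity) (Finset.sum_nonneg fun i _ => (hL i).le)
  have hweight : ∀ i, 1 / (n * q i) = Lbar / L i := fun i => by
    have hn : (n : ℝ) ≠ 0 := Nat.cast_ne_zero.mpr i.pos.ne'
    rw [hq i]
    field_simp
  have hgradF : gradient F xstar = (1 / n : ℝ) • ∑ i, gradient (f i) xstar := by
    rw [show F = fun z => (1 / n : ℝ) * ∑ i, f i z from funext hF]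
    exact (HasGradientAt.const_mul_sum _ _ fun i _ => (hdiff i xstar).hasGradientAt).gradient
  have hbregman : 1 / n * ∑ i, (f i x - f i xstar - ⟪gradient (f i) xstar, x - xstar⟫) =
      F x - F xstar - ⟪gradient F xstar, x - xstar⟫ := by
    rw [hF, hF, hgradF, real_inner_smul_left, sum_inner, Finset.sum_sub_distrib,
      Finset.sum_sub_distrib]
    ring
  have hR := hRsc xstar ξstar hξ x
  rw [eq_neg_of_add_eq_zero_right hopt, inner_neg_left] at hR
  calc 1 / n * ∑ i, 1 / (n * q i) * ‖gradient (f i) x - gradient (f i) xstar‖ ^ 2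
      = 1 / n * ∑ i, Lbar / L i * ‖gradient (f i) x - gradient (f i) xstar‖ ^ 2 := by
        simp only [hweight]
    _ ≤ 1 / n * (2 * Lbar * ∑ i, (f i x - f i xstar - ⟪gradient (f i) xstar, x - xstar⟫)) :=
        mul_le_mul_of_nonneg_left
          (ConvexOn.sum_div_mul_sq_norm_sub_le_of_lipschitz_gradient hconv
            (fun i z => (hdiff i z).hasGradientAt) hL hlip hLbar_nonneg x xstar)
          (by positivity)
    _ = 2 * Lbar * (F x - F xstar - ⟪gradient F xstar, x - xstar⟫) := by rw [← hbregman]; ring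
    _ ≤ 2 * Lbar * (P x - P xstar - μ / 2 * ‖x - xstar‖ ^ 2) :=
        mul_le_mul_of_nonneg_left (by rw [hP, hP]; linarith) (by positivity)

theorem gradient_norm_bound_by_objective_gap (d n : ℕ) (hd : 0 < d) (hn : 0 < n)
    (f : Fin n → EuclideanSpace ℝ (Fin d) → ℝ) (L : Fin n → ℝ)
    (hL : ∀ i, 0 < L i)
    (hconv : ∀ i, ConvexOn ℝ Set.univ (f i))
    (hdiff : ∀ i, Differentiable ℝ (f i))
    (hlip : ∀ i x y, ‖gradient (f i) x - gradient (f i) y‖ ≤ L i * ‖x - y‖)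
    (Lbar : ℝ) (hLbar : Lbar = (1 / (n : ℝ)) * ∑ i, L i)
    (q : Fin n → ℝ) (hq : ∀ i, q i = L i / ((n : ℝ) * Lbar))
    (F : EuclideanSpace ℝ (Fin d) → ℝ)
    (hF : ∀ x, F x = (1 / (n : ℝ)) * ∑ i, f i x)
    (R : EuclideanSpace ℝ (Fin d) → ℝ) (μ : ℝ) (hμ : 0 ≤ μ)
    (hRconv : ConvexOn ℝ Set.univ R)
    (hRsc : ∀ x ξ, HasSubgradientAt R ξ x →
      ∀ y, R x + ⟪ξ, y - x⟫ + (μ / 2) * ‖y - x‖ ^ 2 ≤ R y)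
    (P : EuclideanSpace ℝ (Fin d) → ℝ) (hP : ∀ x, P x = F x + R x)
    (xstar ξstar : EuclideanSpace ℝ (Fin d))
    (hmin : ∀ x, P xstar ≤ P x)
    (hξ : HasSubgradientAt R ξstar xstar)
    (hopt : gradient F xstar + ξstar = 0) :
    ∀ x : EuclideanSpace ℝ (Fin d),
      (1 / (n : ℝ)) * ∑ i, (1 / ((n : ℝ) * q i)) *
          ‖gradient (f i) x - gradient (f i) xstar‖ ^ 2 ≤
        2 * Lbar * (P x - P xstar - (μ / 2) * ‖x - xstar‖ ^ 2) :=
  gradient_norm_bound_by_objective_gap_general d n f L hL hconv hdiff hlip Lbar hLbar q hq F hF R μ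
    hRsc P hP xstar ξstar hξ hopt
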